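/- For probability vectors x, y in R^3 with components sorted in non-increasing order, and ε > 0, the closed ℓ^1-ball of radius ε around x intersected with the ordered simplex equals the closed ℓ^∞-ball of radius ε/2 around x intersected with the ordered simplex. -/
import Mathlib


open Finset

/-- Partial sum of the first `k` components of `x`. -/
def psum (d : ℕ) (x : Fin d → ℝ) (k : ℕ) : ℝ :=
  ∑ i ∈ Finset.univ.filter (fun i : Fin d => (i : ℕ) < k), x i

/-- The ordered probability simplex `Δ_d↓`. -/
def Simplex (d : ℕ) (x : Fin d → ℝ) : Prop :=
  (∀ i j : Fin d, i ≤ j → x j ≤ x i) ∧ (∀ i, 0 ≤ x i) ∧ ∑ i, x i = 1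

/-- Majorization: all partial sums of `x` dominate those of `y`. -/
def Maj (d : ℕ) (x y : Fin d → ℝ) : Prop :=
  ∀ k : ℕ, psum d y k ≤ psum d x k

/-- ℓ∞ distance. -/
noncomputable def dInf (d : ℕ) (x y : Fin d → ℝ) : ℝ := ⨆ i, |x i - y i|

/-- ℓ¹ distance. -/
def dOne (d : ℕ) (x y : Fin d → ℝ) : ℝ := ∑ i, |x i - y i|

lemma sum_abs_le_aux (a b c M : ℝ) (h : a + b + c = 0) (hA : |a| ≤ M) (hB : |b| ≤ M)
    (hC : |c| ≤ M) : |a| + |b| + |c| ≤ 2 * M := by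
  rcases abs_cases a with ⟨ha, ha'⟩ | ⟨ha, ha'⟩ <;> rcases abs_cases b with ⟨hb, hb'⟩ | ⟨hb, hb'⟩ <;>
    rcases abs_cases c with ⟨hc, hc'⟩ | ⟨hc, hc'⟩ <;> linarith

lemma dist_iff (x y : Fin 3 → ℝ) (hx : Simplex 3 x) (hy : Simplex 3 y) (ε : ℝ) :
    dOne 3 y x ≤ ε ↔ dInf 3 y x ≤ ε / 2 := by
  have hxs : x 0 + x 1 + x 2 = 1 := by
    have := hx.2.2; rwa [Fin.sum_univ_three] at this
  have hys : y 0 + y 1 + y 2 = 1 := by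
    have := hy.2.2; rwa [Fin.sum_univ_three] at this
  have h0 : (y 0 - x 0) + (y 1 - x 1) + (y 2 - x 2) = 0 := by linarith
  have hdo : dOne 3 y x = |y 0 - x 0| + |y 1 - x 1| + |y 2 - x 2| := by
    simp [dOne, Fin.sum_univ_three]
  have hle : ∀ i, |y i - x i| ≤ dInf 3 y x := fun i => by
    rw [dInf]
    exact le_ciSup (Set.Finite.bddAbove (Set.finite_range fun j => |y j - x j|)) i
  constructor
  · intro hd
    show (⨆ i, |y i - x i|) ≤ ε / 2
    refine ciSup_le fun i => ?_
    have h1 : |y 0 - x 0| ≤ |y 1 - x 1| + |y 2 - x 2| := by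
      rw [show y 0 - x 0 = -((y 1 - x 1) + (y 2 - x 2)) by linarith, abs_neg]
      exact abs_add_le _ _
    have h2 : |y 1 - x 1| ≤ |y 0 - x 0| + |y 2 - x 2| := by
      rw [show y 1 - x 1 = -((y 0 - x 0) + (y 2 - x 2)) by linarith, abs_neg]
      exact abs_add_le _ _
    have h3 : |y 2 - x 2| ≤ |y 0 - x 0| + |y 1 - x 1| := by
      rw [show y 2 - x 2 = -((y 0 - x 0) + (y 1 - x 1)) by linarith, abs_neg]
      exact abs_add_le _ _
    rw [hdo] at hd
    fin_cases i
    · show |y 0 - x 0| ≤ ε / 2; linarith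
    · show |y 1 - x 1| ≤ ε / 2; linarith
    · show |y 2 - x 2| ≤ ε / 2; linarith
  · intro hd
    rw [hdo]
    have hA := (hle 0).trans hd
    have hB := (hle 1).trans hd
    have hC := (hle 2).trans hd
    have := sum_abs_le_aux _ _ _ _ h0 hA hB hC
    linarith

theorem ball_l1_eq_ball_linf_half (x : Fin 3 → ℝ) (hx : Simplex 3 x) (ε : ℝ) (hε : 0 < ε) :
    {x' : Fin 3 → ℝ | Simplex 3 x' ∧ dOne 3 x' x ≤ ε} =
      {x' : Fin 3 → ℝ | Simplex 3 x' ∧ dInf 3 x' x ≤ ε / 2} := by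
  ext y
  simp only [Set.mem_setOf_eq]
  exact ⟨fun ⟨hy, hd⟩ => ⟨hy, (dist_iff x y hx hy ε).1 hd⟩,
    fun ⟨hy, hd⟩ => ⟨hy, (dist_iff x y hx hy ε).2 hd⟩⟩
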